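/- With G, C1, C2, α_1, α_2 as in the context (in particular G has no universal vertex), if α_1 + α_2 ≥ 4, then G has a 3-tuple dominating set and γ×3(G) = 4. -/

import Mathlib

open Set

/-- The closed neighborhood `N[v]` of a vertex `v`: `v` together with its neighbors. -/
def closedNbhd {V : Type*} (G : SimpleGraph V) (v : V) : Set V :=
  insert v {w | G.Adj v w}

/-- `D` is a `k`-tuple dominating set of `G`: every vertex has at least `k` members of `D`
in its closed neighborhood. -/
def IsKTupleDomSet {V : Type*} (G : SimpleGraph V) (k : ℕ) (D : Set V) : Prop :=
  ∀ v : V, k ≤ (closedNbhd G v ∩ D).ncard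

/-- `γ×k(G)`: the minimum cardinality of a `k`-tuple dominating set of `G`. -/
noncomputable def gammaTuple {V : Type*} (G : SimpleGraph V) (k : ℕ) : ℕ :=
  sInf {n | ∃ D : Set V, IsKTupleDomSet G k D ∧ D.ncard = n}

/-- A vertex is universal if its closed neighborhood is the whole vertex set. -/
def IsUniversalVertex {V : Type*} (G : SimpleGraph V) (u : V) : Prop :=
  closedNbhd G u = Set.univ

/-- The non-neighbor set `N̄(v) = V \ N[v]`. -/
def nonNbhd {V : Type*} (G : SimpleGraph V) (v : V) : Set V :=
  (closedNbhd G v)ᶜ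

/-- `S` is a stable set of the auxiliary interval graph `H_i`: the non-neighbor sets of the
vertices of `S` are pairwise disjoint. -/
def IsC0PStable {V : Type*} (G : SimpleGraph V) (S : Set V) : Prop :=
  S.Pairwise fun u w => Disjoint (nonNbhd G u) (nonNbhd G w)

/-!
A `3`-tuple dominating set of size `3` would lie in every closed neighbourhood, so each of its
members would be universal; hence `γ×3(G) ≥ 4`. Conversely, a vertex `v` is a non-neighbour of
at most one member of a stable set `S` (their non-neighbour sets are disjoint, and `v` lies in
the non-neighbour set of each), and of no vertex of its own clique. So if `S ⊆ C1` and `T ⊆ C2`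
are stable, every vertex misses at most one member of `S ∪ T`, and since `α1 + α2 ≥ 4` we can
take `|S| + |T| = 4`.
-/

section

variable {V : Type*} {G : SimpleGraph V} {u v : V}

lemma mem_closedNbhd : u ∈ closedNbhd G v ↔ u = v ∨ G.Adj v u := Iff.rfl

lemma mem_closedNbhd_comm : u ∈ closedNbhd G v ↔ v ∈ closedNbhd G u := by
  simp only [mem_closedNbhd, eq_comm, G.adj_comm]

lemma mem_nonNbhd_comm : u ∈ nonNbhd G v ↔ v ∈ nonNbhd G u :=
  not_congr mem_closedNbhd_comm

lemma SimpleGraph.IsClique.disjoint_nonNbhd {A : Set V} (hA : G.IsClique A) (hv : v ∈ A) :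
    Disjoint (nonNbhd G v) A :=
  Set.disjoint_left.mpr fun u hu huA =>
    hu (mem_closedNbhd.mpr ((eq_or_ne u v).imp id fun h => hA hv huA h.symm))

lemma IsC0PStable.subsingleton_nonNbhd_inter {S : Set V} (hS : IsC0PStable G S) (v : V) :
    (nonNbhd G v ∩ S).Subsingleton := by
  rintro x ⟨hx, hxS⟩ y ⟨hy, hyS⟩
  by_contra hxy
  exact Set.disjoint_left.mp (hS hxS hyS hxy) (mem_nonNbhd_comm.mp hx) (mem_nonNbhd_comm.mp hy)

lemma nonNbhd_inter_union_subset {A S T : Set V} (hA : G.IsClique A) (hS : S ⊆ A) (hv : v ∈ A) :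
    nonNbhd G v ∩ (S ∪ T) ⊆ nonNbhd G v ∩ T := by
  rintro x ⟨hx, hxS | hxT⟩
  · exact absurd (hS hxS) (Set.disjoint_left.mp (hA.disjoint_nonNbhd hv) hx)
  · exact ⟨hx, hxT⟩

lemma subsingleton_nonNbhd_inter_union {A B S T : Set V} (hAB : A ∪ B = univ)
    (hA : G.IsClique A) (hB : G.IsClique B) (hSA : S ⊆ A) (hTB : T ⊆ B)
    (hS : IsC0PStable G S) (hT : IsC0PStable G T) (v : V) :
    (nonNbhd G v ∩ (S ∪ T)).Subsingleton := by
  rcases (hAB.symm ▸ mem_univ v : v ∈ A ∪ B) with hvA | hvB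
  · exact (hT.subsingleton_nonNbhd_inter v).anti (nonNbhd_inter_union_subset hA hSA hvA)
  · rw [union_comm]
    exact (hS.subsingleton_nonNbhd_inter v).anti (nonNbhd_inter_union_subset hB hTB hvB)

lemma isKTupleDomSet_of_subsingleton_nonNbhd_inter {k : ℕ} {D : Set V} (hD : D.Finite)
    (hk : k + 1 ≤ D.ncard) (h : ∀ v, (nonNbhd G v ∩ D).Subsingleton) :
    IsKTupleDomSet G k D := by
  intro v
  have hsplit := ncard_inter_add_ncard_sdiff_eq_ncard D (closedNbhd G v) hD
  have hmiss : (D \ closedNbhd G v).ncard ≤ 1 := by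
    have : Finite ↑(D \ closedNbhd G v) := hD.sdiff.to_subtype
    rw [ncard_le_one_iff_subsingleton, sdiff_eq, inter_comm]
    exact h v
  rw [inter_comm]
  omega

lemma IsKTupleDomSet.lt_ncard [Finite V] [Nonempty V] {k : ℕ} {D : Set V}
    (hD : IsKTupleDomSet G k D) (hk : 0 < k) (hnouniv : ∀ v, ¬ IsUniversalVertex G v) :
    k < D.ncard := by
  obtain ⟨v₀⟩ := ‹Nonempty V›
  have hle : k ≤ D.ncard := (hD v₀).trans (ncard_le_ncard inter_subset_right)
  refine lt_of_le_of_ne hle fun hkD => ?_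
  have hsub : ∀ v, D ⊆ closedNbhd G v := fun v =>
    (eq_of_subset_of_ncard_le inter_subset_right (hkD ▸ hD v)) ▸ inter_subset_left
  obtain ⟨d, hd⟩ := nonempty_of_ncard_ne_zero (hkD ▸ hk.ne' : D.ncard ≠ 0)
  exact hnouniv d (eq_univ_of_forall fun v => mem_closedNbhd_comm.mp (hsub v hd))

end

theorem stmt13_general {V : Type*} [Fintype V] (G : SimpleGraph V) (C1 C2 : Set V)
    (hd12 : Disjoint C1 C2) (hunion : C1 ∪ C2 = Set.univ)
    (hcl1 : G.IsClique C1) (hcl2 : G.IsClique C2)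
    (hnouniv : ∀ v : V, ¬ IsUniversalVertex G v)
    (α1 α2 : ℕ)
    (hα1 : IsGreatest {n | ∃ S : Set V, S ⊆ C1 ∧ IsC0PStable G S ∧ S.ncard = n} α1)
    (hα2 : IsGreatest {n | ∃ S : Set V, S ⊆ C2 ∧ IsC0PStable G S ∧ S.ncard = n} α2)
    (h : 4 ≤ α1 + α2) :
    (∃ D : Set V, IsKTupleDomSet G 3 D) ∧ gammaTuple G 3 = 4 := by
  obtain ⟨S1, hS1C1, hS1, rfl⟩ := hα1.1
  obtain ⟨S2, hS2C2, hS2, rfl⟩ := hα2.1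
  obtain ⟨S, hSS1, hS⟩ := exists_subset_card_eq (min_le_left S1.ncard 4)
  obtain ⟨T, hTS2, hT⟩ := exists_subset_card_eq (s := S2) (n := 4 - min S1.ncard 4) (by omega)
  have hD4 : (S ∪ T).ncard = 4 := by
    rw [ncard_union_eq (hd12.mono (hSS1.trans hS1C1) (hTS2.trans hS2C2)), hS, hT]
    omega
  have hdom : IsKTupleDomSet G 3 (S ∪ T) :=
    isKTupleDomSet_of_subsingleton_nonNbhd_inter (toFinite _) hD4.ge
      (subsingleton_nonNbhd_inter_union hunion hcl1 hcl2 (hSS1.trans hS1C1) (hTS2.trans hS2C2)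
        (hS1.mono hSS1) (hS2.mono hTS2))
  obtain ⟨x, -⟩ := nonempty_of_ncard_ne_zero (by omega : (S ∪ T).ncard ≠ 0)
  have : Nonempty V := ⟨x⟩
  refine ⟨⟨_, hdom⟩, IsLeast.csInf_eq ⟨⟨_, hdom, hD4⟩, ?_⟩⟩
  rintro n ⟨D, hD, rfl⟩
  exact hD.lt_ncard three_pos hnouniv

/-- in a C0P-graph with no universal vertices, if `α1 + α2 ≥ 4` then `G` has a `3`-tuple dominating set and `γ×3(G) = 4`. -/
theorem stmt13 {V : Type*} [Fintype V] [LinearOrder V] (G : SimpleGraph V) (C1 C2 : Set V)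
    (hd12 : Disjoint C1 C2) (hunion : C1 ∪ C2 = Set.univ)
    (hne1 : C1.Nonempty) (hne2 : C2.Nonempty)
    (hcl1 : G.IsClique C1) (hcl2 : G.IsClique C2)
    (hnouniv : ∀ v : V, ¬ IsUniversalVertex G v)
    (hint1 : ∀ v ∈ C1, (nonNbhd G v).Nonempty ∧
      ∀ a ∈ C2, ∀ b ∈ C2, ∀ c ∈ C2, a ≤ b → b ≤ c →
        a ∈ nonNbhd G v → c ∈ nonNbhd G v → b ∈ nonNbhd G v)
    (hint2 : ∀ v ∈ C2, (nonNbhd G v).Nonempty ∧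
      ∀ a ∈ C1, ∀ b ∈ C1, ∀ c ∈ C1, a ≤ b → b ≤ c →
        a ∈ nonNbhd G v → c ∈ nonNbhd G v → b ∈ nonNbhd G v)
    (α1 α2 : ℕ)
    (hα1 : IsGreatest {n | ∃ S : Set V, S ⊆ C1 ∧ IsC0PStable G S ∧ S.ncard = n} α1)
    (hα2 : IsGreatest {n | ∃ S : Set V, S ⊆ C2 ∧ IsC0PStable G S ∧ S.ncard = n} α2)
    (h : 4 ≤ α1 + α2) :
    (∃ D : Set V, IsKTupleDomSet G 3 D) ∧ gammaTuple G 3 = 4 :=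
  stmt13_general G C1 C2 hd12 hunion hcl1 hcl2 hnouniv α1 α2 hα1 hα2 h
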